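/- (Game characterization of the generalized robustness of states, finite-dimensional case) Let F be a nonempty compact convex set of d×d density matrices containing a positive definite density matrix, and let ρ be a d×d density matrix. Then sup { Re(tr(Y·ρ)) / (sup_{σ∈F} Re(tr(Y·σ))) : Y a nonzero d×d positive semidefinite matrix } = 1 + R_F(ρ). (Note that sup_{σ∈F} Re(tr(Y·σ)) > 0 automatically for every nonzero positive semidefinite Y, since F contains a positive definite state, so all quotients are well defined.) -/

import Mathlib

open scoped ENNReal NNReal ComplexOrder

def IsDensity {d : ℕ} (ρ : Matrix (Fin d) (Fin d) ℂ) : Prop :=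
  ρ.PosSemidef ∧ ρ.trace = 1

/-- `⨅` over the empty set is `∞`: a state with no feasible `t` has infinite robustness. -/
noncomputable def Rgen {d : ℕ} (F : Set (Matrix (Fin d) (Fin d) ℂ))
    (ρ : Matrix (Fin d) (Fin d) ℂ) : ℝ≥0∞ :=
  ⨅ t ∈ {t : ℝ≥0 | ∃ τ, IsDensity τ ∧
      ∃ σ ∈ F, ρ + (t : ℝ) • τ = ((1 : ℝ) + (t : ℝ)) • σ}, (t : ℝ≥0∞)

/-!
Feasibility of `t` for the robustness means `ρ ≤ (1 + t) • σ` in the Loewner order for some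
`σ ∈ F`. Pairing with a witness `Y ≥ 0` gives `Re tr (Y ρ) ≤ (1 + t) * sup_F Re tr (Y σ)`, so every
payoff ratio is at most `1 + R_F(ρ)`. Conversely, for `t < R_F(ρ)` the compact convex set
`(1 + t) • F - ρ` misses the closed PSD cone; a separating real functional, written as
`X ↦ Re tr (Y X)`, is nonnegative on the cone, so `Y ≥ 0`, and its ratio exceeds `1 + t`.
The positive definite state in `F` makes every denominator positive and `R_F(ρ)` finite.
-/

open scoped MatrixOrder

namespace Matrix

lemma convex_setOf_posSemidef {n : Type*} : Convex ℝ {A : Matrix n n ℂ | A.PosSemidef} :=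
  fun _ hA _ hB _ _ ha hb _ ↦ (hA.smul ha).add (hB.smul hb)

variable {n : Type*} [Fintype n]

lemma PosSemidef.trace_mul_nonneg {𝕜 : Type*} [RCLike 𝕜] {A B : Matrix n n 𝕜}
    (hA : A.PosSemidef) (hB : B.PosSemidef) : 0 ≤ (A * B).trace := by
  classical
  rw [← nonneg_iff_posSemidef] at hA hB
  have hs : IsSelfAdjoint (CFC.sqrt A) := .of_nonneg (CFC.sqrt_nonneg A)
  calc (0 : 𝕜) ≤ (star (CFC.sqrt A) * B * CFC.sqrt A).trace :=
        (nonneg_iff_posSemidef.mp (star_left_conjugate_nonneg hB _)).trace_nonneg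
    _ = (A * B).trace := by
        rw [hs.star_eq, trace_mul_cycle]
        conv_rhs => rw [← CFC.sqrt_mul_sqrt_self A hA]

lemma trace_mul_le_trace_mul {𝕜 : Type*} [RCLike 𝕜] {Y A B : Matrix n n 𝕜}
    (hY : Y.PosSemidef) (hAB : A ≤ B) : (Y * A).trace ≤ (Y * B).trace := by
  simpa [mul_sub, trace_sub] using hY.trace_mul_nonneg hAB

lemma PosDef.exists_pos_smul_one_le {𝕜 : Type*} [RCLike 𝕜] [DecidableEq n] {A : Matrix n n 𝕜}
    (hA : A.PosDef) : ∃ r : ℝ, 0 < r ∧ r • (1 : Matrix n n 𝕜) ≤ A := by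
  rcases subsingleton_or_nontrivial (Matrix n n 𝕜) with h | h
  · exact ⟨1, one_pos, (Subsingleton.elim _ _ : _ = A).le⟩
  have hA' := isStrictlyPositive_iff_posDef.mpr hA
  simpa [Algebra.algebraMap_eq_smul_one] using
    (CFC.exists_pos_algebraMap_le_iff hA'.isSelfAdjoint).mpr fun _ hx ↦ hA'.spectrum_pos hx

lemma IsHermitian.exists_le_smul_one {𝕜 : Type*} [RCLike 𝕜] [DecidableEq n] {A : Matrix n n 𝕜}
    (hA : A.IsHermitian) : ∃ r : ℝ, A ≤ r • (1 : Matrix n n 𝕜) := by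
  obtain ⟨r, hr⟩ :=
    (isCompact_iff_compactSpace.mpr inferInstance : IsCompact (spectrum ℝ A)).bddAbove
  exact ⟨r, by simpa [Algebra.algebraMap_eq_smul_one] using
    (le_algebraMap_iff_spectrum_le (r := r) (a := A) hA.isSelfAdjoint).mpr fun _ hx ↦ hr hx⟩

lemma PosDef.exists_le_one_add_smul [DecidableEq n] {σ : Matrix n n ℂ} (hσ : σ.PosDef)
    {ρ : Matrix n n ℂ} (hρ : ρ.IsHermitian) : ∃ t : ℝ≥0, ρ ≤ ((1 : ℝ) + t) • σ := by
  obtain ⟨r, hr, hrσ⟩ := hσ.exists_pos_smul_one_le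
  obtain ⟨s, hρs⟩ := hρ.exists_le_smul_one
  refine ⟨(s / r).toNNReal, ?_⟩
  set t : ℝ := ((s / r).toNNReal : ℝ)
  have hst : s ≤ (1 + t) * r := by
    have : s / r ≤ t := Real.le_coe_toNNReal _
    rw [div_le_iff₀ hr] at this
    nlinarith [NNReal.coe_nonneg (s / r).toNNReal]
  have hsplit : ((1 : ℝ) + t) • σ - ρ =
      ((1 : ℝ) + t) • (σ - r • 1) + ((1 + t) * r - s) • (1 : Matrix n n ℂ) + (s • 1 - ρ) := by
    module
  rw [le_iff, hsplit]
  exact ((hrσ.smul (by positivity)).add (PosSemidef.one.smul (by linarith))).add hρs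

lemma PosSemidef.re_trace_mul_pos_of_posDef [DecidableEq n] {Y σ : Matrix n n ℂ}
    (hY : Y.PosSemidef) (hY0 : Y ≠ 0) (hσ : σ.PosDef) : 0 < (Y * σ).trace.re := by
  obtain ⟨r, hr, hrσ⟩ := hσ.exists_pos_smul_one_le
  have htr : 0 < Y.trace := hY.trace_nonneg.lt_of_ne (Ne.symm (mt hY.trace_eq_zero_iff.mp hY0))
  calc 0 < r * Y.trace.re := mul_pos hr (Complex.pos_iff.mp htr).1
    _ = (Y * (r • 1 : Matrix n n ℂ)).trace.re := by simp
    _ ≤ (Y * σ).trace.re := Complex.re_le_re (trace_mul_le_trace_mul hY hrσ)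

lemma isClosed_setOf_posSemidef : IsClosed {A : Matrix n n ℂ | A.PosSemidef} := by
  have : {A : Matrix n n ℂ | A.PosSemidef} =
      {A | Aᴴ = A} ∩ ⋂ x : n → ℂ, {A | 0 ≤ star x ⬝ᵥ A *ᵥ x} :=
    Set.ext fun A ↦ by
      simpa using ⟨fun h ↦ ⟨h.1, h.dotProduct_mulVec_nonneg⟩,
        fun h ↦ PosSemidef.of_dotProduct_mulVec_nonneg h.1 h.2⟩
  rw [this]
  exact (isClosed_eq continuous_id.matrix_conjTranspose continuous_id).inter <|
    isClosed_iInter fun x ↦ isClosed_le continuous_const <|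
      continuous_const.dotProduct (continuous_id.matrix_mulVec continuous_const)

lemma exists_isHermitian_re_trace_mul_eq (f : Module.Dual ℝ (Matrix n n ℂ)) :
    ∃ H : Matrix n n ℂ, H.IsHermitian ∧ ∀ X, X.IsHermitian → (H * X).trace.re = f X := by
  classical
  let g : Module.Dual ℂ (Matrix n n ℂ) := f.extendRCLike
  let Y : Matrix n n ℂ := of fun i j ↦ g (single j i 1)
  have hY : ∀ X, (Y * X).trace = g X := by
    intro X
    conv_rhs => rw [matrix_eq_sum_single X]
    simp only [Y, trace, diag, mul_apply, of_apply, map_sum]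
    rw [Finset.sum_comm]
    refine Finset.sum_congr rfl fun i _ ↦ Finset.sum_congr rfl fun j _ ↦ ?_
    rw [mul_comm, ← smul_eq_mul, ← map_smul, smul_single, smul_eq_mul, mul_one]
  refine ⟨(2⁻¹ : ℝ) • (Y + Yᴴ), ?_, fun X hX ↦ ?_⟩
  · simp [IsHermitian, conjTranspose_add, add_comm]
  · have hYX : (Yᴴ * X).trace = star (Y * X).trace := by
      rw [← trace_conjTranspose, conjTranspose_mul, hX.eq, trace_mul_comm]
    have hg : (g X).re = f X := f.re_extendRCLike_apply (𝕜 := ℂ) X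
    simp only [smul_mul, add_mul, trace_smul, trace_add, hYX, hY, Complex.smul_re,
      Complex.add_re, Complex.star_def, Complex.conj_re, hg, smul_eq_mul]
    ring

lemma IsHermitian.posSemidef_of_re_trace_mul_nonneg {H : Matrix n n ℂ} (hH : H.IsHermitian)
    (h : ∀ P : Matrix n n ℂ, P.PosSemidef → 0 ≤ (H * P).trace.re) : H.PosSemidef := by
  refine .of_dotProduct_mulVec_nonneg hH fun x ↦ Complex.nonneg_iff.mpr ⟨?_, ?_⟩
  · simpa [mul_vecMulVec, trace_vecMulVec, dotProduct_comm] using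
      h _ (posSemidef_vecMulVec_self_star x)
  · exact (hH.im_star_dotProduct_mulVec_self x).symm

lemma exists_posSemidef_re_trace_mul_neg {K : Set (Matrix n n ℂ)} (hKc : IsCompact K)
    (hKconv : Convex ℝ K) (hKh : ∀ X ∈ K, X.IsHermitian) (hK : ∀ X ∈ K, ¬ X.PosSemidef) :
    ∃ H : Matrix n n ℂ, H.PosSemidef ∧ ∀ X ∈ K, (H * X).trace.re < 0 := by
  have : LocallyConvexSpace ℝ (Matrix n n ℂ) :=
    inferInstanceAs (LocallyConvexSpace ℝ (n → n → ℂ))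
  obtain ⟨f, u, v, hfK, huv, hfP⟩ := geometric_hahn_banach_compact_closed hKconv hKc
    convex_setOf_posSemidef isClosed_setOf_posSemidef
    (Set.disjoint_left.mpr fun X hX hP ↦ hK X hX hP)
  have hv : v < 0 := by simpa using hfP 0 PosSemidef.zero
  -- `f` is bounded below by `v` on the PSD cone, hence nonnegative there.
  have hf : ∀ P : Matrix n n ℂ, P.PosSemidef → 0 ≤ f P := by
    intro P hP
    by_contra! hneg
    have := hfP ((v / f P) • P) (hP.smul (div_pos_of_neg_of_neg hv hneg).le)
    rw [map_smul, smul_eq_mul, div_mul_cancel₀ _ hneg.ne] at this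
    exact this.false
  obtain ⟨H, hH, hHf⟩ := exists_isHermitian_re_trace_mul_eq f.toLinearMap
  refine ⟨H, hH.posSemidef_of_re_trace_mul_nonneg fun P hP ↦ ?_, fun X hX ↦ ?_⟩
  · rw [hHf P hP.isHermitian]
    exact hf P hP
  · rw [hHf X (hKh X hX)]
    exact (hfK X hX).trans (huv.trans hv)

lemma exists_posSemidef_lt_of_forall_not_le {F : Set (Matrix n n ℂ)} (hcomp : IsCompact F)
    (hconv : Convex ℝ F) (hFh : ∀ σ ∈ F, σ.IsHermitian) {ρ : Matrix n n ℂ} (hρ : ρ.IsHermitian)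
    (c : ℝ) (h : ∀ σ ∈ F, ¬ ρ ≤ c • σ) :
    ∃ H : Matrix n n ℂ, H.PosSemidef ∧ ∀ σ ∈ F, c * (H * σ).trace.re < (H * ρ).trace.re := by
  obtain ⟨H, hH, hHK⟩ := exists_posSemidef_re_trace_mul_neg
    (hcomp.image (continuous_const.add (continuous_const_smul c)) : IsCompact
      ((fun σ ↦ -ρ + c • σ) '' F))
    (hconv.affinity (-ρ) c)
    (by rintro _ ⟨σ, hσ, rfl⟩; exact hρ.neg.add ((hFh σ hσ).smul (.all c)))
    (by rintro _ ⟨σ, hσ, rfl⟩; simpa [neg_add_eq_sub, Matrix.le_iff] using h σ hσ)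
  refine ⟨H, hH, fun σ hσ ↦ ?_⟩
  have := hHK _ ⟨σ, hσ, rfl⟩
  simp only [mul_add, mul_neg, mul_smul_comm, trace_add, trace_neg, trace_smul, Complex.add_re,
    Complex.neg_re, Complex.smul_re, smul_eq_mul] at this
  linarith

section Payoff

variable {F : Set (Matrix n n ℂ)}

lemma isGreatest_sSup_re_trace_mul_image (hcomp : IsCompact F) (hne : F.Nonempty)
    (Y : Matrix n n ℂ) :
    IsGreatest ((fun σ ↦ (Y * σ).trace.re) '' F) (sSup ((fun σ ↦ (Y * σ).trace.re) '' F)) :=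
  (hcomp.image (by fun_prop)).isGreatest_sSup (hne.image _)

lemma sSup_re_trace_mul_image_pos [DecidableEq n] (hcomp : IsCompact F) {σ₀ : Matrix n n ℂ}
    (hσ₀F : σ₀ ∈ F) (hσ₀ : σ₀.PosDef) {Y : Matrix n n ℂ} (hY : Y.PosSemidef) (hY0 : Y ≠ 0) :
    0 < sSup ((fun σ ↦ (Y * σ).trace.re) '' F) :=
  (hY.re_trace_mul_pos_of_posDef hY0 hσ₀).trans_le
    ((isGreatest_sSup_re_trace_mul_image hcomp ⟨σ₀, hσ₀F⟩ Y).2 ⟨σ₀, hσ₀F, rfl⟩)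

lemma sSup_re_trace_one_mul_image [DecidableEq n] (hne : F.Nonempty)
    (hF : ∀ σ ∈ F, σ.trace = 1) :
    sSup ((fun σ ↦ ((1 : Matrix n n ℂ) * σ).trace.re) '' F) = 1 := by
  rw [Set.image_congr (g := fun _ ↦ 1) fun σ hσ ↦ by simp [hF σ hσ], hne.image_const,
    csSup_singleton]

lemma re_trace_mul_div_sSup_le (hcomp : IsCompact F) {Y : Matrix n n ℂ} (hY : Y.PosSemidef)
    (hden : 0 < sSup ((fun σ ↦ (Y * σ).trace.re) '' F)) {ρ σ : Matrix n n ℂ} (hσF : σ ∈ F)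
    {c : ℝ} (hc : 0 ≤ c) (hρσ : ρ ≤ c • σ) :
    (Y * ρ).trace.re / sSup ((fun σ ↦ (Y * σ).trace.re) '' F) ≤ c := by
  rw [div_le_iff₀ hden]
  calc (Y * ρ).trace.re ≤ (Y * (c • σ)).trace.re :=
        Complex.re_le_re (trace_mul_le_trace_mul hY hρσ)
    _ = c * (Y * σ).trace.re := by simp
    _ ≤ c * sSup ((fun σ ↦ (Y * σ).trace.re) '' F) := by
        gcongr
        exact (isGreatest_sSup_re_trace_mul_image hcomp ⟨σ, hσF⟩ Y).2 ⟨σ, hσF, rfl⟩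

lemma exists_lt_re_trace_mul_div_sSup [DecidableEq n] (hcomp : IsCompact F)
    (hconv : Convex ℝ F) (hFh : ∀ σ ∈ F, σ.IsHermitian) {σ₀ : Matrix n n ℂ} (hσ₀F : σ₀ ∈ F)
    (hσ₀ : σ₀.PosDef) {ρ : Matrix n n ℂ} (hρ : ρ.IsHermitian) (c : ℝ)
    (h : ∀ σ ∈ F, ¬ ρ ≤ c • σ) :
    ∃ Y : Matrix n n ℂ, Y.PosSemidef ∧ Y ≠ 0 ∧
      c < (Y * ρ).trace.re / sSup ((fun σ ↦ (Y * σ).trace.re) '' F) := by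
  obtain ⟨Y, hY, hYρ⟩ := exists_posSemidef_lt_of_forall_not_le hcomp hconv hFh hρ c h
  have hY0 : Y ≠ 0 := by rintro rfl; simpa using hYρ σ₀ hσ₀F
  obtain ⟨σ, hσF, hσ⟩ := (isGreatest_sSup_re_trace_mul_image hcomp ⟨σ₀, hσ₀F⟩ Y).1
  refine ⟨Y, hY, hY0, ?_⟩
  rw [lt_div_iff₀ (sSup_re_trace_mul_image_pos hcomp hσ₀F hσ₀ hY hY0), ← hσ]
  exact hYρ σ hσF

end Payoff

end Matrix

lemma csSup_eq_one_add_toReal_iInf {G : Set ℝ} {S : Set ℝ≥0} (hS : S.Nonempty) (h1 : 1 ∈ G)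
    (hle : ∀ x ∈ G, ∀ t ∈ S, x ≤ 1 + t) (hlt : ∀ t : ℝ≥0, t ∉ S → ∃ x ∈ G, 1 + t < x) :
    sSup G = 1 + (⨅ t ∈ S, (t : ℝ≥0∞)).toReal := by
  rw [← ENNReal.coe_sInf hS, ENNReal.coe_toReal, NNReal.coe_sInf]
  obtain ⟨t₀, ht₀⟩ := hS
  have hG : BddAbove G := ⟨1 + t₀, fun x hx ↦ hle x hx t₀ ht₀⟩
  have hS' : BddBelow (NNReal.toReal '' S) := ⟨0, by rintro _ ⟨t, -, rfl⟩; exact t.2⟩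
  refine le_antisymm (csSup_le ⟨1, h1⟩ fun x hx ↦ ?_) ?_
  · have : x - 1 ≤ sInf (NNReal.toReal '' S) :=
      le_csInf ⟨t₀, t₀, ht₀, rfl⟩ (by rintro _ ⟨t, ht, rfl⟩; linarith [hle x hx t ht])
    linarith
  · by_contra! h
    have h0 : 0 ≤ sSup G - 1 := by linarith [le_csSup hG h1]
    obtain ⟨x, hx, hx'⟩ := hlt ⟨sSup G - 1, h0⟩ fun hmem ↦ by
      linarith [show sInf (NNReal.toReal '' S) ≤ sSup G - 1 from csInf_le hS' ⟨_, hmem, rfl⟩]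
    linarith [le_csSup hG hx, show 1 + (sSup G - 1) < x from hx']

section Density

variable {d : ℕ}

lemma exists_isDensity_add_smul_eq_iff {ρ σ : Matrix (Fin d) (Fin d) ℂ} (hρ : ρ.trace = 1)
    (hσ : IsDensity σ) {t : ℝ} (ht : 0 ≤ t) :
    (∃ τ, IsDensity τ ∧ ρ + t • τ = (1 + t) • σ) ↔ ρ ≤ (1 + t) • σ := by
  constructor
  · rintro ⟨τ, hτ, h⟩
    rw [Matrix.le_iff, ← h, add_sub_cancel_left]
    exact hτ.1.smul ht
  · intro h
    have htr : ((1 + t) • σ - ρ).trace = t := by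
      simp [Matrix.trace_sub, Matrix.trace_smul, hσ.2, hρ]
    rcases ht.eq_or_lt with rfl | ht
    · refine ⟨σ, hσ, ?_⟩
      simpa [sub_eq_zero, eq_comm] using h.trace_eq_zero_iff.mp (by simpa using htr)
    · refine ⟨t⁻¹ • ((1 + t) • σ - ρ), ⟨h.smul (inv_nonneg.2 ht.le), ?_⟩, ?_⟩
      · rw [Matrix.trace_smul, htr]
        simp [ht.ne']
      · rw [smul_smul, mul_inv_cancel₀ ht.ne', one_smul, add_sub_cancel]

lemma rgen_eq_iInf_le_smul {F : Set (Matrix (Fin d) (Fin d) ℂ)} (hF : ∀ σ ∈ F, IsDensity σ)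
    {ρ : Matrix (Fin d) (Fin d) ℂ} (hρ : ρ.trace = 1) :
    Rgen F ρ = ⨅ t ∈ {t : ℝ≥0 | ∃ σ ∈ F, ρ ≤ ((1 : ℝ) + t) • σ}, (t : ℝ≥0∞) := by
  unfold Rgen
  congr! 3 with t
  constructor
  · rintro ⟨τ, hτ, σ, hσ, h⟩
    exact ⟨σ, hσ, (exists_isDensity_add_smul_eq_iff hρ (hF σ hσ) t.2).mp ⟨τ, hτ, h⟩⟩
  · rintro ⟨σ, hσ, h⟩
    obtain ⟨τ, hτ, h⟩ := (exists_isDensity_add_smul_eq_iff hρ (hF σ hσ) t.2).mpr h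
    exact ⟨τ, hτ, σ, hσ, h⟩

end Density

/-- Game characterization of the generalized robustness of states: the supremum over
nonzero positive semidefinite witnesses `Y` of the payoff ratio equals
`1 + R_F(ρ)`. (Since `F` contains a positive definite state, the denominator
`sup_{σ ∈ F} Re tr(Y σ)` is positive for every nonzero `Y ≥ 0`.) -/
theorem rgen_game {d : ℕ} (F : Set (Matrix (Fin d) (Fin d) ℂ))
    (hne : F.Nonempty) (hcomp : IsCompact F) (hconv : Convex ℝ F)
    (hFd : ∀ σ ∈ F, IsDensity σ) (hpd : ∃ σ ∈ F, σ.PosDef)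
    (ρ : Matrix (Fin d) (Fin d) ℂ) (hρ : IsDensity ρ) :
    sSup {x : ℝ | ∃ Y : Matrix (Fin d) (Fin d) ℂ, Y.PosSemidef ∧ Y ≠ 0 ∧
        x = ((Y * ρ).trace).re / sSup ((fun σ => ((Y * σ).trace).re) '' F)} =
      1 + (Rgen F ρ).toReal := by
  obtain ⟨σ₀, hσ₀F, hσ₀⟩ := hpd
  have : Nonempty (Fin d) := by
    by_contra h
    simpa [not_nonempty_iff.mp h, Matrix.trace] using hρ.2
  rw [rgen_eq_iInf_le_smul hFd hρ.2]
  refine csSup_eq_one_add_toReal_iInf ?_ ?_ ?_ ?_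
  · obtain ⟨t, ht⟩ := hσ₀.exists_le_one_add_smul hρ.1.1
    exact ⟨t, σ₀, hσ₀F, ht⟩
  · refine ⟨1, .one, one_ne_zero, ?_⟩
    rw [Matrix.sSup_re_trace_one_mul_image hne fun σ hσ ↦ (hFd σ hσ).2, one_mul, hρ.2]
    simp
  · rintro _ ⟨Y, hY, hY0, rfl⟩ t ⟨σ, hσF, hρσ⟩
    exact Matrix.re_trace_mul_div_sSup_le hcomp hY
      (Matrix.sSup_re_trace_mul_image_pos hcomp hσ₀F hσ₀ hY hY0) hσF (by positivity) hρσ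
  · intro t ht
    obtain ⟨Y, hY, hY0, hlt⟩ := Matrix.exists_lt_re_trace_mul_div_sSup hcomp hconv
      (fun σ hσ ↦ (hFd σ hσ).1.1) hσ₀F hσ₀ hρ.1.1 _ fun σ hσ hle ↦ ht ⟨σ, hσ, hle⟩
    exact ⟨_, ⟨Y, hY, hY0, rfl⟩, hlt⟩
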